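/- Let Ŵ2, E2, Ŵ3, E3 be mutually independent real random variables, exponentially distributed with means σ̂2², σ_{e2}², σ̂3², σ_{e3}² > 0 respectively. Let P1, P2, P3, N0, γ̄2 > 0 with λ_P := P2/P1 > γ̄2, and set ρ12 = P1·σ̂2²/N0, ρ3 = P3·σ̂3²/N0. Define X = Ŵ2·P2/(Ŵ2·P1 + E2·(P1+P2) + N0) and Y = Ŵ3·P3/(E3·P3 + N0). Then P{ X + Y < γ̄2 } = 1 − (1 + (σ_{e3}²/σ̂3²)·γ̄2)^{−1}·exp(−γ̄2/ρ3) − ∫₀^{γ̄2} [ (1/ρ3)·(1 + (σ_{e3}²/σ̂3²)·y)^{−1} + (σ_{e3}²/σ̂3²)·(1 + (σ_{e3}²/σ̂3²)·y)^{−2} ] · (1 + ((γ̄2 − y)·(1+λ_P)/(λ_P − γ̄2 + y))·σ_{e2}²/σ̂2²)^{−1} · exp( −((γ̄2 − y)/(λ_P − γ̄2 + y))·(1/ρ12) − y/ρ3 ) dy. -/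

import Mathlib

/-!
Write `X = φ(E₂, W₂)` and `Y = ψ(E₃, W₃)`. For a fixed level `t`, the events `X < t` and
`Y ≤ t` are, on the nonnegative quadrant, the regions below a line `W = a E + b` with
`a, b ≥ 0`, and for independent exponentials
`P(W ≥ a E + b) = E[exp (-(a E + b)/σ_W)] = exp (-b/σ_W) / (1 + a σ_E/σ_W)` is a Laplace
transform. This gives the distribution function of `X` on `[0, λ_P)` and that of `Y`;
differentiating the latter gives a density `f_Y`, and by independence
`P(X + Y < γ̄₂) = ∫₀^γ̄₂ f_Y(y) P(X < γ̄₂ - y) dy`, which splits into the two terms of the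
formula.
-/

open MeasureTheory ProbabilityTheory

/-- The law of an exponentially distributed random variable with mean `a`. -/
noncomputable def expMean (a : ℝ) : Measure ℝ :=
  volume.withDensity fun x => ENNReal.ofReal (if 0 ≤ x then (1 / a) * Real.exp (-x / a) else 0)

open Real Set Filter

lemma measure_map_Iio_zero_eq_zero {α : Type*} [MeasurableSpace α] {μ : Measure α} {f : α → ℝ}
    (hf : Measurable f) (h : ∀ᵐ x ∂μ, 0 ≤ f x) : μ.map f (Iio 0) = 0 := by
  rw [Measure.map_apply hf measurableSet_Iio, measure_eq_zero_iff_ae_notMem]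
  filter_upwards [h] with x hx using not_lt.2 hx

lemma eq_withDensity_of_measureReal_Iic {μ : Measure ℝ} [IsFiniteMeasure μ] {f : ℝ → ℝ}
    (hf : ContinuousOn f (Ici 0)) (hf0 : ∀ x, 0 ≤ x → 0 ≤ f x) (hμ : μ (Iio 0) = 0)
    (hcdf : ∀ t, 0 ≤ t → μ.real (Iic t) = ∫ x in 0..t, f x) :
    μ = (volume.restrict (Ici 0)).withDensity fun x => ENNReal.ofReal (f x) := by
  refine Measure.ext_of_Iic _ _ fun t => ?_
  rw [withDensity_apply _ measurableSet_Iic, Measure.restrict_restrict measurableSet_Iic,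
    Iic_inter_Ici]
  rcases lt_or_ge t 0 with ht | ht
  · rw [Icc_eq_empty_of_lt ht, Measure.restrict_empty, lintegral_zero_measure]
    exact measure_mono_null (Iic_subset_Iio.2 ht) hμ
  · rw [← ofReal_measureReal, hcdf t ht, intervalIntegral.integral_of_le ht,
      ← integral_Icc_eq_integral_Ioc, ofReal_integral_eq_lintegral_ofReal
        ((hf.mono Icc_subset_Ici_self).integrableOn_Icc)
        (ae_restrict_of_forall_mem measurableSet_Icc fun x hx => hf0 x hx.1)]

lemma measureReal_prod_add_lt_of_withDensity {μ : Measure ℝ} [IsFiniteMeasure μ]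
    (hμ : μ (Iio 0) = 0) {f : ℝ → ℝ} (hf : Measurable f) (hf0 : ∀ y, 0 ≤ y → 0 ≤ f y)
    {γ : ℝ} (hγ : 0 ≤ γ) :
    (μ.prod ((volume.restrict (Ici 0)).withDensity fun y => ENNReal.ofReal (f y))).real
        {p | p.1 + p.2 < γ} = ∫ y in 0..γ, f y * μ.real (Iio (γ - y)) := by
  have hS : MeasurableSet {p : ℝ × ℝ | p.1 + p.2 < γ} :=
    measurableSet_lt (by fun_prop) measurable_const
  have hsec : ∀ y, (fun x => (x, y)) ⁻¹' {p : ℝ × ℝ | p.1 + p.2 < γ} = Iio (γ - y) :=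
    fun y => by ext x; simp [lt_sub_iff_add_lt]
  have hG : Measurable fun y => μ (Iio (γ - y)) :=
    Antitone.measurable fun y z h => measure_mono (Iio_subset_Iio (by linarith))
  have hnonneg : ∀ y ∈ Ici (0 : ℝ), 0 ≤ f y * μ.real (Iio (γ - y)) := fun y hy =>
    mul_nonneg (hf0 y hy) measureReal_nonneg
  rw [measureReal_def, Measure.prod_apply_symm hS]
  simp only [hsec]
  rw [lintegral_withDensity_eq_lintegral_mul _ hf.ennreal_ofReal hG]
  change (∫⁻ y in Ici 0, ENNReal.ofReal (f y) * μ (Iio (γ - y))).toReal = _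
  rw [setLIntegral_congr_fun measurableSet_Ici fun y hy => by
      rw [← ofReal_measureReal, ← ENNReal.ofReal_mul (hf0 y hy)],
    ← integral_eq_lintegral_of_nonneg_ae (ae_restrict_of_forall_mem measurableSet_Ici hnonneg)
      (hf.mul hG.ennreal_toReal).aestronglyMeasurable,
    setIntegral_eq_of_subset_of_forall_sdiff_eq_zero measurableSet_Ici Icc_subset_Ici_self
      fun y hy => ?_, integral_Icc_eq_integral_Ioc, intervalIntegral.integral_of_le hγ]
  have hy : γ < y := not_le.1 fun h => hy.2 ⟨hy.1, h⟩
  rw [(measureReal_eq_zero_iff).2 (measure_mono_null (Iio_subset_Iio (by linarith)) hμ),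
    mul_zero]

lemma ProbabilityTheory.IndepFun.measureReal_comp_add_comp_lt {Ω α β : Type*}
    [MeasurableSpace Ω] [MeasurableSpace α] [MeasurableSpace β] {P : Measure Ω}
    [IsFiniteMeasure P] {U : Ω → α} {V : Ω → β} (h : IndepFun U V P) (hU : AEMeasurable U P)
    (hV : AEMeasurable V P) {φ : α → ℝ} {ψ : β → ℝ} (hφ : Measurable φ) (hψ : Measurable ψ)
    (γ : ℝ) :
    P.real {ω | φ (U ω) + ψ (V ω) < γ} =
      (((P.map U).map φ).prod ((P.map V).map ψ)).real {p | p.1 + p.2 < γ} := by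
  have hX : AEMeasurable (φ ∘ U) P := hφ.comp_aemeasurable hU
  have hY : AEMeasurable (ψ ∘ V) P := hψ.comp_aemeasurable hV
  rw [AEMeasurable.map_map_of_aemeasurable hφ.aemeasurable hU,
    AEMeasurable.map_map_of_aemeasurable hψ.aemeasurable hV,
    ← (h.comp hφ hψ).map_prod_eq_prod_map_map hX hY,
    map_measureReal_apply_of_aemeasurable (hX.prodMk hY)
      (measurableSet_lt (by fun_prop) measurable_const)]
  rfl

section ExponentialLaw

variable {a : ℝ}

lemma expMean_eq_expMeasure : expMean a = expMeasure a⁻¹ := by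
  rw [expMean, expMeasure, gammaMeasure]
  congr 1 with x
  change _ = ENNReal.ofReal (exponentialPDFReal a⁻¹ x)
  rw [← exponentialPDF, exponentialPDF_eq]
  congr 1
  split_ifs
  · ring_nf
  · rfl

lemma isProbabilityMeasure_expMean (ha : 0 < a) : IsProbabilityMeasure (expMean a) := by
  rw [expMean_eq_expMeasure]
  exact isProbabilityMeasure_expMeasure (inv_pos.2 ha)

lemma aemeasurable_of_map_eq_expMean {Ω : Type*} [MeasurableSpace Ω] {P : Measure Ω}
    {X : Ω → ℝ} (ha : 0 < a) (hX : P.map X = expMean a) : AEMeasurable X P := by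
  have := isProbabilityMeasure_expMean ha
  exact .of_map_ne_zero (hX ▸ IsProbabilityMeasure.ne_zero _)

instance : NullSingletonClass (expMean a) := by
  unfold expMean; infer_instance

lemma expMean_Ici (ha : 0 < a) {m : ℝ} (hm : 0 ≤ m) :
    expMean a (Ici m) = ENNReal.ofReal (exp (-m / a)) := by
  have := isProbabilityMeasure_expMean ha
  rw [← ofReal_measureReal, ← compl_Iio, probReal_compl_eq_one_sub measurableSet_Iio,
    measureReal_congr Iio_ae_eq_Iic, ← cdf_eq_real, expMean_eq_expMeasure,
    cdf_expMeasure_eq (inv_pos.2 ha), if_pos hm]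
  ring_nf

lemma ae_nonneg_expMean (ha : 0 < a) : ∀ᵐ x ∂expMean a, 0 ≤ x := by
  have := isProbabilityMeasure_expMean ha
  refine mem_ae_iff.2 ((prob_compl_eq_zero_iff measurableSet_Ici).2 ?_)
  simp [expMean_Ici ha le_rfl]

lemma lintegral_exp_neg_mul_expMean (ha : 0 < a) {s : ℝ} (hs : 0 ≤ s) :
    ∫⁻ x, ENNReal.ofReal (exp (-(s * x))) ∂expMean a = ENNReal.ofReal ((1 + s * a)⁻¹) := by
  have hc : -(a⁻¹ + s) < 0 := by have := inv_pos.2 ha; linarith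
  have hint : IntegrableOn (fun x => a⁻¹ * exp (-(a⁻¹ + s) * x)) (Ici 0) :=
    (integrableOn_Ici_iff_integrableOn_Ioi).2 ((integrableOn_exp_mul_Ioi hc 0).const_mul _)
  rw [expMean, lintegral_withDensity_eq_lintegral_mul _
    (Measurable.ite measurableSet_Ici (by fun_prop) measurable_const).ennreal_ofReal (by fun_prop)]
  calc ∫⁻ x, ((fun x => ENNReal.ofReal (if 0 ≤ x then 1 / a * exp (-x / a) else 0)) *
          fun x => ENNReal.ofReal (exp (-(s * x)))) x
      = ∫⁻ x in Ici 0, ENNReal.ofReal (a⁻¹ * exp (-(a⁻¹ + s) * x)) := by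
        rw [← lintegral_indicator measurableSet_Ici]
        congr 1 with x
        by_cases hx : 0 ≤ x
        · rw [Pi.mul_apply, if_pos hx, indicator_of_mem (mem_Ici.2 hx),
            ← ENNReal.ofReal_mul (by positivity), mul_assoc, ← exp_add]
          ring_nf
        · simp [hx]
    _ = ENNReal.ofReal ((1 + s * a)⁻¹) := by
        rw [← ofReal_integral_eq_lintegral_ofReal hint
            (ae_restrict_of_forall_mem measurableSet_Ici fun x _ => by positivity),
          integral_const_mul, integral_Ici_eq_integral_Ioi, integral_exp_mul_Ioi hc, mul_zero,
          exp_zero]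
        field_simp

end ExponentialLaw

section AffineThreshold

variable {σe σw a b : ℝ}

lemma ae_nonneg_expMean_prod (hσe : 0 < σe) (hσw : 0 < σw) :
    ∀ᵐ p ∂(expMean σe).prod (expMean σw), 0 ≤ p.1 ∧ 0 ≤ p.2 := by
  have := isProbabilityMeasure_expMean hσe
  exact (Measure.quasiMeasurePreserving_fst.ae (ae_nonneg_expMean hσe)).and
    (Measure.quasiMeasurePreserving_snd.ae (ae_nonneg_expMean hσw))

lemma lintegral_expMean_Ici_affine (hσe : 0 < σe) (hσw : 0 < σw) (ha : 0 ≤ a) (hb : 0 ≤ b) :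
    ∫⁻ e, expMean σw (Ici (a * e + b)) ∂expMean σe =
      ENNReal.ofReal ((1 + a * σe / σw)⁻¹ * exp (-b / σw)) := by
  calc ∫⁻ e, expMean σw (Ici (a * e + b)) ∂expMean σe
      = ∫⁻ e, ENNReal.ofReal (exp (-b / σw)) * ENNReal.ofReal (exp (-(a / σw * e)))
          ∂expMean σe := by
        refine lintegral_congr_ae ((ae_nonneg_expMean hσe).mono fun e he => ?_)
        dsimp only
        rw [expMean_Ici hσw (by positivity), ← ENNReal.ofReal_mul (exp_pos _).le, ← exp_add]
        ring_nf
    _ = ENNReal.ofReal ((1 + a * σe / σw)⁻¹ * exp (-b / σw)) := by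
        rw [lintegral_const_mul _ (by fun_prop),
          lintegral_exp_neg_mul_expMean hσe (by positivity), ← ENNReal.ofReal_mul (exp_pos _).le,
          mul_comm, div_mul_eq_mul_div]

lemma measureReal_expMean_prod_lt_affine (hσe : 0 < σe) (hσw : 0 < σw) (ha : 0 ≤ a)
    (hb : 0 ≤ b) :
    ((expMean σe).prod (expMean σw)).real {p | p.2 < a * p.1 + b} =
      1 - (1 + a * σe / σw)⁻¹ * exp (-b / σw) := by
  have := isProbabilityMeasure_expMean hσe
  have := isProbabilityMeasure_expMean hσw
  have hS : MeasurableSet {p : ℝ × ℝ | a * p.1 + b ≤ p.2} :=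
    measurableSet_le (by fun_prop) measurable_snd
  rw [show {p : ℝ × ℝ | p.2 < a * p.1 + b} = {p | a * p.1 + b ≤ p.2}ᶜ by ext; simp,
    probReal_compl_eq_one_sub hS, measureReal_def, Measure.prod_apply hS]
  change 1 - (∫⁻ e, expMean σw (Ici (a * e + b)) ∂expMean σe).toReal = _
  rw [lintegral_expMean_Ici_affine hσe hσw ha hb, ENNReal.toReal_ofReal (by positivity)]

lemma measureReal_expMean_prod_le_affine (hσe : 0 < σe) (hσw : 0 < σw) (ha : 0 ≤ a)
    (hb : 0 ≤ b) :
    ((expMean σe).prod (expMean σw)).real {p | p.2 ≤ a * p.1 + b} =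
      1 - (1 + a * σe / σw)⁻¹ * exp (-b / σw) := by
  have := isProbabilityMeasure_expMean hσe
  have := isProbabilityMeasure_expMean hσw
  have hS : MeasurableSet {p : ℝ × ℝ | a * p.1 + b < p.2} :=
    measurableSet_lt (by fun_prop) measurable_snd
  rw [show {p : ℝ × ℝ | p.2 ≤ a * p.1 + b} = {p | a * p.1 + b < p.2}ᶜ by ext; simp,
    probReal_compl_eq_one_sub hS, measureReal_def, Measure.prod_apply hS]
  change 1 - (∫⁻ e, expMean σw (Ioi (a * e + b)) ∂expMean σe).toReal = _
  rw [lintegral_congr fun e => measure_congr Ioi_ae_eq_Ici,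
    lintegral_expMean_Ici_affine hσe hσw ha hb, ENNReal.toReal_ofReal (by positivity)]

end AffineThreshold

section DirectLink

/-- The SINR of the direct link at `p = (|e₂|², |ĥ₂|²)`. -/
noncomputable def directSINR (P1 P2 N0 : ℝ) (p : ℝ × ℝ) : ℝ :=
  p.2 * P2 / (p.2 * P1 + p.1 * (P1 + P2) + N0)

/-- `P(X ≥ t)` for `0 ≤ t < λ_P`, where `ρ = ρ₁₂` and `s = σ_{e2}²/σ̂₂²`. -/
noncomputable def directTail (lam ρ s t : ℝ) : ℝ :=
  (1 + t * (1 + lam) / (lam - t) * s)⁻¹ * exp (-(t / (lam - t)) * (1 / ρ))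

variable {σe σw P1 P2 N0 : ℝ}

lemma measurable_directSINR : Measurable (directSINR P1 P2 N0) := by
  unfold directSINR; fun_prop

lemma continuousOn_directTail {lam ρ s : ℝ} (hs : 0 ≤ s) :
    ContinuousOn (directTail lam ρ s) (Ico 0 lam) := by
  have hden : ∀ t ∈ Ico 0 lam, lam - t ≠ 0 := fun t ht => (sub_pos.2 ht.2).ne'
  refine ContinuousOn.mul (ContinuousOn.inv₀ (by fun_prop (disch := exact hden)) fun t ht => ?_)
    (by fun_prop (disch := exact hden))
  have := ht.1
  have := sub_pos.2 ht.2
  have : 0 ≤ t * (1 + lam) / (lam - t) * s := by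
    have : 0 < lam := by linarith
    positivity
  linarith

lemma measureReal_map_directSINR_Iio (hσe : 0 < σe) (hσw : 0 < σw) (hP1 : 0 < P1)
    (hP2 : 0 < P2) (hN0 : 0 < N0) {t : ℝ} (ht0 : 0 ≤ t) (ht : t < P2 / P1) :
    (((expMean σe).prod (expMean σw)).map (directSINR P1 P2 N0)).real (Iio t) =
      1 - directTail (P2 / P1) (P1 * σw / N0) (σe / σw) t := by
  have hD : 0 < P2 - t * P1 := by rw [lt_div_iff₀ hP1] at ht; linarith
  set a := t * (P1 + P2) / (P2 - t * P1)
  set b := t * N0 / (P2 - t * P1)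
  have hset : directSINR P1 P2 N0 ⁻¹' Iio t
      =ᵐ[(expMean σe).prod (expMean σw)] {p | p.2 < a * p.1 + b} := by
    filter_upwards [ae_nonneg_expMean_prod hσe hσw] with p ⟨h1, h2⟩
    have hd : 0 < p.2 * P1 + p.1 * (P1 + P2) + N0 := by positivity
    change (p.2 * P2 / (p.2 * P1 + p.1 * (P1 + P2) + N0) < t) = (p.2 < a * p.1 + b)
    rw [eq_iff_iff, div_lt_iff₀ hd,
      show a * p.1 + b = t * (p.1 * (P1 + P2) + N0) / (P2 - t * P1) by ring, lt_div_iff₀ hD]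
    constructor <;> intro <;> linarith
  rw [map_measureReal_apply measurable_directSINR measurableSet_Iio, measureReal_congr hset,
    measureReal_expMean_prod_lt_affine hσe hσw (by positivity) (by positivity), directTail]
  have : P2 / P1 - t ≠ 0 := (sub_pos.2 ht).ne'
  congr 3
  · simp only [a]; field_simp
  · simp only [b]; field_simp

end DirectLink

section RelayLink

/-- The SINR of the relay link at `p = (|e₃|², |ĥ₃|²)`. -/
noncomputable def relaySINR (P3 N0 : ℝ) (p : ℝ × ℝ) : ℝ := p.2 * P3 / (p.1 * P3 + N0)

noncomputable def relayCDF (κ ρ t : ℝ) : ℝ := 1 - (1 + κ * t)⁻¹ * exp (-t / ρ)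

noncomputable def relayPDF (κ ρ y : ℝ) : ℝ :=
  (1 / ρ * (1 + κ * y)⁻¹ + κ * ((1 + κ * y) ^ 2)⁻¹) * exp (-y / ρ)

variable {κ ρ σe σw P3 N0 : ℝ}

lemma measurable_relaySINR : Measurable (relaySINR P3 N0) := by
  unfold relaySINR; fun_prop

lemma hasDerivAt_relayCDF {y : ℝ} (hy : 1 + κ * y ≠ 0) :
    HasDerivAt (relayCDF κ ρ) (relayPDF κ ρ y) y := by
  have hlin : HasDerivAt (fun y => 1 + κ * y) κ y := by
    simpa using ((hasDerivAt_id y).const_mul κ).const_add 1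
  have hinv : HasDerivAt (fun y => (1 + κ * y)⁻¹) (-κ / (1 + κ * y) ^ 2) y := hlin.inv hy
  have hexp : HasDerivAt (fun y => exp (-y / ρ)) (exp (-y / ρ) * (-1 / ρ)) y :=
    (hasDerivAt_exp _).comp y (by simpa using (hasDerivAt_id y).neg.div_const ρ)
  refine ((hinv.mul hexp).const_sub 1).congr_deriv ?_
  simp only [relayPDF]
  field_simp
  ring

lemma continuousOn_relayPDF (hκ : 0 ≤ κ) : ContinuousOn (relayPDF κ ρ) (Ici 0) := by
  have hne : ∀ y ∈ Ici (0 : ℝ), 1 + κ * y ≠ 0 := fun y (hy : 0 ≤ y) => by positivity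
  have hlin : ContinuousOn (fun y => 1 + κ * y) (Ici 0) := by fun_prop
  exact ((continuousOn_const.mul (hlin.inv₀ hne)).add (continuousOn_const.mul
    ((hlin.pow 2).inv₀ fun y hy => pow_ne_zero 2 (hne y hy)))).mul (by fun_prop)

lemma relayPDF_nonneg (hκ : 0 ≤ κ) (hρ : 0 ≤ ρ) {y : ℝ} (hy : 0 ≤ y) : 0 ≤ relayPDF κ ρ y := by
  unfold relayPDF; positivity

lemma measurable_relayPDF : Measurable (relayPDF κ ρ) := by
  unfold relayPDF; fun_prop

lemma integral_relayPDF (hκ : 0 ≤ κ) {t : ℝ} (ht : 0 ≤ t) :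
    ∫ y in 0..t, relayPDF κ ρ y = relayCDF κ ρ t := by
  have hsub : uIcc 0 t ⊆ Ici 0 := by rw [uIcc_of_le ht]; exact Icc_subset_Ici_self
  rw [intervalIntegral.integral_eq_sub_of_hasDerivAt
    (fun y hy => hasDerivAt_relayCDF (by have : (0 : ℝ) ≤ y := hsub hy; positivity))
    ((continuousOn_relayPDF hκ).mono hsub).intervalIntegrable]
  simp [relayCDF]

lemma measureReal_map_relaySINR_Iic (hσe : 0 < σe) (hσw : 0 < σw) (hP3 : 0 < P3) (hN0 : 0 < N0)
    {t : ℝ} (ht : 0 ≤ t) :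
    (((expMean σe).prod (expMean σw)).map (relaySINR P3 N0)).real (Iic t) =
      relayCDF (σe / σw) (P3 * σw / N0) t := by
  have hset : relaySINR P3 N0 ⁻¹' Iic t
      =ᵐ[(expMean σe).prod (expMean σw)] {p | p.2 ≤ t * p.1 + t * N0 / P3} := by
    filter_upwards [ae_nonneg_expMean_prod hσe hσw] with p ⟨h1, h2⟩
    have hd : 0 < p.1 * P3 + N0 := by positivity
    change (p.2 * P3 / (p.1 * P3 + N0) ≤ t) = (p.2 ≤ t * p.1 + t * N0 / P3)
    rw [eq_iff_iff, div_le_iff₀ hd, show t * p.1 + t * N0 / P3 = t * (p.1 * P3 + N0) / P3 by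
      field_simp, le_div_iff₀ hP3]
  rw [map_measureReal_apply measurable_relaySINR measurableSet_Iic, measureReal_congr hset,
    measureReal_expMean_prod_le_affine hσe hσw ht (by positivity), relayCDF]
  congr 3 <;> field_simp

lemma map_relaySINR_eq_withDensity (hσe : 0 < σe) (hσw : 0 < σw) (hP3 : 0 < P3)
    (hN0 : 0 < N0) :
    ((expMean σe).prod (expMean σw)).map (relaySINR P3 N0) =
      (volume.restrict (Ici 0)).withDensity
        fun y => ENNReal.ofReal (relayPDF (σe / σw) (P3 * σw / N0) y) := by
  have := isProbabilityMeasure_expMean hσe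
  have := isProbabilityMeasure_expMean hσw
  have := Measure.isProbabilityMeasure_map (μ := (expMean σe).prod (expMean σw))
    (measurable_relaySINR (P3 := P3) (N0 := N0)).aemeasurable
  refine eq_withDensity_of_measureReal_Iic (continuousOn_relayPDF (by positivity))
    (fun y hy => relayPDF_nonneg (by positivity) (by positivity) hy)
    (measure_map_Iio_zero_eq_zero measurable_relaySINR ?_) fun t ht => ?_
  · filter_upwards [ae_nonneg_expMean_prod hσe hσw] with p ⟨h1, h2⟩
    unfold relaySINR
    positivity
  · rw [measureReal_map_relaySINR_Iic hσe hσw hP3 hN0 ht, integral_relayPDF (by positivity) ht]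

end RelayLink

lemma measureReal_directSINR_add_relaySINR_lt {σh2 σe2 σh3 σe3 P1 P2 P3 N0 γ : ℝ}
    (hσh2 : 0 < σh2) (hσe2 : 0 < σe2) (hσh3 : 0 < σh3) (hσe3 : 0 < σe3) (hP1 : 0 < P1)
    (hP2 : 0 < P2) (hP3 : 0 < P3) (hN0 : 0 < N0) (hγ : 0 ≤ γ) (hlam : γ < P2 / P1) :
    ((((expMean σe2).prod (expMean σh2)).map (directSINR P1 P2 N0)).prod
        (((expMean σe3).prod (expMean σh3)).map (relaySINR P3 N0))).real {p | p.1 + p.2 < γ} =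
      relayCDF (σe3 / σh3) (P3 * σh3 / N0) γ - ∫ y in 0..γ,
        relayPDF (σe3 / σh3) (P3 * σh3 / N0) y *
          directTail (P2 / P1) (P1 * σh2 / N0) (σe2 / σh2) (γ - y) := by
  have := isProbabilityMeasure_expMean hσe2
  have := isProbabilityMeasure_expMean hσh2
  have hX0 : ((expMean σe2).prod (expMean σh2)).map (directSINR P1 P2 N0) (Iio 0) = 0 :=
    measure_map_Iio_zero_eq_zero measurable_directSINR
      ((ae_nonneg_expMean_prod hσe2 hσh2).mono fun p ⟨h1, h2⟩ => by unfold directSINR; positivity)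
  have hpdf : ContinuousOn (relayPDF (σe3 / σh3) (P3 * σh3 / N0)) (uIcc 0 γ) :=
    (continuousOn_relayPDF (by positivity)).mono (by
      rw [uIcc_of_le hγ]; exact Icc_subset_Ici_self)
  have htail : ContinuousOn (fun y => directTail (P2 / P1) (P1 * σh2 / N0) (σe2 / σh2) (γ - y))
      (uIcc 0 γ) := by
    refine (continuousOn_directTail (by positivity)).comp (by fun_prop) fun y hy => ?_
    rw [uIcc_of_le hγ] at hy
    exact ⟨by linarith [hy.2], by linarith [hy.1]⟩
  have hint : IntervalIntegrable (fun y => relayPDF (σe3 / σh3) (P3 * σh3 / N0) y *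
      directTail (P2 / P1) (P1 * σh2 / N0) (σe2 / σh2) (γ - y)) volume 0 γ :=
    (hpdf.mul htail).intervalIntegrable
  rw [map_relaySINR_eq_withDensity hσe3 hσh3 hP3 hN0,
    measureReal_prod_add_lt_of_withDensity hX0 measurable_relayPDF
      (fun y hy => relayPDF_nonneg (by positivity) (by positivity) hy) hγ,
    ← integral_relayPDF (by positivity) hγ, ← intervalIntegral.integral_sub
      hpdf.intervalIntegrable hint]
  refine intervalIntegral.integral_congr fun y hy => ?_
  rw [uIcc_of_le hγ] at hy
  rw [measureReal_map_directSINR_Iio hσe2 hσh2 hP1 hP2 hN0 (t := γ - y) (by linarith [hy.2])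
    (by linarith [hy.1]), mul_one_sub]

/-- Lemma 1, eq. (13): outage probability of the far user UE2 in
Case 2 (MRC of the direct-link SINR `X` and the relay-link SINR `Y`).  With
`W2 = |ĥ2|²`, `E2 = |e2|²`, `W3 = |ĥ3|²`, `E3 = |e3|²` mutually independent
exponentials, `λ_P = P2/P1 > γ̄2`, `ρ12 = P1·σ̂2²/N0`, `ρ3 = P3·σ̂3²/N0`,
`κ = σ_{e3}²/σ̂3²`:
`P{X + Y < γ̄2} = 1 − (1 + κ·γ̄2)⁻¹·exp(−γ̄2/ρ3) − ∫₀^{γ̄2} [...] dy`. -/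
theorem stmt_6 {Ω : Type*} [MeasurableSpace Ω] (P : Measure Ω) [IsProbabilityMeasure P]
    (W2 E2 W3 E3 : Ω → ℝ) (σh2 σe2 σh3 σe3 P1 P2 P3 N0 γ2 : ℝ)
    (hσh2 : 0 < σh2) (hσe2 : 0 < σe2) (hσh3 : 0 < σh3) (hσe3 : 0 < σe3)
    (hP1 : 0 < P1) (hP2 : 0 < P2) (hP3 : 0 < P3) (hN0 : 0 < N0) (hγ2 : 0 < γ2)
    (hlam : γ2 < P2 / P1)
    (hind : iIndepFun ![W2, E2, W3, E3] P)
    (hW2 : P.map W2 = expMean σh2) (hE2 : P.map E2 = expMean σe2)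
    (hW3 : P.map W3 = expMean σh3) (hE3 : P.map E3 = expMean σe3)
    (lamP ρ12 ρ3 κ : ℝ)
    (hlamP : lamP = P2 / P1) (hρ12 : ρ12 = P1 * σh2 / N0)
    (hρ3 : ρ3 = P3 * σh3 / N0) (hκ : κ = σe3 / σh3) :
    (P {ω | W2 ω * P2 / (W2 ω * P1 + E2 ω * (P1 + P2) + N0) +
            W3 ω * P3 / (E3 ω * P3 + N0) < γ2}).toReal =
      1 - (1 + κ * γ2)⁻¹ * Real.exp (-γ2 / ρ3) -
        ∫ y in (0:ℝ)..γ2,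
          ((1 / ρ3) * (1 + κ * y)⁻¹ + κ * ((1 + κ * y) ^ 2)⁻¹) *
            (1 + (γ2 - y) * (1 + lamP) / (lamP - γ2 + y) * (σe2 / σh2))⁻¹ *
            Real.exp (-((γ2 - y) / (lamP - γ2 + y)) * (1 / ρ12) - y / ρ3) := by
  subst hlamP hρ12 hρ3 hκ
  have hW2m := aemeasurable_of_map_eq_expMean hσh2 hW2
  have hE2m := aemeasurable_of_map_eq_expMean hσe2 hE2
  have hW3m := aemeasurable_of_map_eq_expMean hσh3 hW3
  have hE3m := aemeasurable_of_map_eq_expMean hσe3 hE3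
  have hUV : IndepFun (fun ω => (E2 ω, W2 ω)) (fun ω => (E3 ω, W3 ω)) P :=
    hind.indepFun_prodMk_prodMk₀ (fun i => by fin_cases i <;> assumption) 1 0 3 2
      (by decide) (by decide) (by decide) (by decide)
  have hlaw2 : P.map (fun ω => (E2 ω, W2 ω)) = (expMean σe2).prod (expMean σh2) := by
    have h : IndepFun E2 W2 P := hind.indepFun (i := 1) (j := 0) (by decide)
    rw [h.map_prod_eq_prod_map_map hE2m hW2m, hE2, hW2]
  have hlaw3 : P.map (fun ω => (E3 ω, W3 ω)) = (expMean σe3).prod (expMean σh3) := by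
    have h : IndepFun E3 W3 P := hind.indepFun (i := 3) (j := 2) (by decide)
    rw [h.map_prod_eq_prod_map_map hE3m hW3m, hE3, hW3]
  rw [← measureReal_def]
  refine (hUV.measureReal_comp_add_comp_lt (φ := directSINR P1 P2 N0) (ψ := relaySINR P3 N0)
    (hE2m.prodMk hW2m) (hE3m.prodMk hW3m) measurable_directSINR measurable_relaySINR γ2).trans ?_
  rw [hlaw2, hlaw3, measureReal_directSINR_add_relaySINR_lt hσh2 hσe2 hσh3 hσe3 hP1 hP2 hP3 hN0
    hγ2.le hlam]
  refine congrArg _ (intervalIntegral.integral_congr fun y _ => ?_)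
  simp only [relayPDF, directTail]
  rw [show P2 / P1 - (γ2 - y) = P2 / P1 - γ2 + y by ring, sub_eq_add_neg _ (y / _), exp_add,
    neg_div]
  ring
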